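/- Fix α∈(0,1) and γ∈(0,α). Then lim_{x→0+} x^γ · ∫_x^∞ λ_{α,γ}(t) dt = αΓ(1−γ/α)/(Γ(1−α)Γ(1−γ)); in particular the tail Λ_{α,γ}([x,∞)) = ∫_x^∞ λ_{α,γ}(t)dt of the tagged-particle Lévy measure is regularly varying at 0 with index −γ. -/

import Mathlib

open MeasureTheory

/-- Density of the tagged-particle Lévy measure `Λ_{α,γ}` of the alpha-gamma
fragmentation (Corollary 16 of the paper). -/
noncomputable def lamAG (α γ : ℝ) (x : ℝ) : ℝ :=
  (α * Real.Gamma (1 - γ / α) / (Real.Gamma (1 - α) * Real.Gamma (1 - γ))) *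
    (1 - Real.exp (-x)) ^ (-1 - γ) * Real.exp (-x) ^ (1 - α) *
    (γ + (1 - α - γ) *
      (2 * Real.exp (-x) * (1 - Real.exp (-x)) +
        ((α - γ) / (1 - γ)) * (1 - Real.exp (-x)) ^ 2))

/-- Explicit antiderivative computation with an opaque constant `C`. -/
lemma auxDeriv (α γ : ℝ) (hα1 : α < 1) (hγα : γ < α) (C : ℝ) :
    ∀ t : ℝ, 0 < t → HasDerivAt
      (fun s => -(C / (1 - γ) * ((1 - Real.exp (-s)) ^ (-γ) *
        (Real.exp (-s) ^ (1 - α) * (α + (1 - α - γ) * Real.exp (-s))))))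
      (C * (1 - Real.exp (-t)) ^ (-1 - γ) * Real.exp (-t) ^ (1 - α) *
        (γ + (1 - α - γ) *
          (2 * Real.exp (-t) * (1 - Real.exp (-t)) +
            ((α - γ) / (1 - γ)) * (1 - Real.exp (-t)) ^ 2))) t := by
  intro t ht
  have hγ1 : γ < 1 := hγα.trans hα1
  have h1γ : (1:ℝ) - γ ≠ 0 := by intro h; nlinarith
  have hu0 : 0 < Real.exp (-t) := Real.exp_pos _
  have hu1 : Real.exp (-t) < 1 := by rw [Real.exp_lt_one_iff]; linarith
  have hb0 : 0 < 1 - Real.exp (-t) := by linarith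
  have hu : HasDerivAt (fun s : ℝ => Real.exp (-s)) (-Real.exp (-t)) t := by
    simpa [Function.comp_def] using (Real.hasDerivAt_exp (-t)).comp t (hasDerivAt_neg t)
  have hb : HasDerivAt (fun s : ℝ => 1 - Real.exp (-s)) (Real.exp (-t)) t := by
    simpa [Pi.sub_def] using (hasDerivAt_const t (1:ℝ)).sub hu
  have hA : HasDerivAt (fun s => (1 - Real.exp (-s)) ^ (-γ))
      (Real.exp (-t) * (-γ) * (1 - Real.exp (-t)) ^ (-γ - 1)) t :=
    hb.rpow_const (Or.inl hb0.ne')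
  have hB : HasDerivAt (fun s => Real.exp (-s) ^ (1 - α))
      (-Real.exp (-t) * (1 - α) * Real.exp (-t) ^ (1 - α - 1)) t :=
    hu.rpow_const (Or.inl hu0.ne')
  have hP : HasDerivAt (fun s => α + (1 - α - γ) * Real.exp (-s))
      (0 + (1 - α - γ) * (-Real.exp (-t))) t :=
    (hasDerivAt_const t α).add (hu.const_mul (1 - α - γ))
  have hT := ((hA.mul (hB.mul hP)).const_mul (C / (1 - γ))).neg
  refine hT.congr_deriv ?_
  symm
  simp only [Pi.mul_apply]
  have e1 : (1 - Real.exp (-t)) ^ (-γ)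
      = (1 - Real.exp (-t)) ^ (-γ - 1) * (1 - Real.exp (-t)) := by
    rw [← Real.rpow_add_one hb0.ne' (-γ - 1)]; congr 1; ring
  have e2 : Real.exp (-t) ^ (1 - α - 1) = Real.exp (-t) ^ (1 - α) / Real.exp (-t) := by
    rw [Real.rpow_sub_one hu0.ne']
  have e3 : (1 - Real.exp (-t)) ^ (-1 - γ) = (1 - Real.exp (-t)) ^ (-γ - 1) := by
    rw [show (-1 - γ) = -γ - 1 by ring]
  rw [e1, e2, e3]
  field_simp
  ring

/-- The explicit tail of the Lévy measure. -/
noncomputable def tailAG (α γ : ℝ) (x : ℝ) : ℝ :=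
  (α * Real.Gamma (1 - γ / α) / (Real.Gamma (1 - α) * Real.Gamma (1 - γ))) / (1 - γ) *
    ((1 - Real.exp (-x)) ^ (-γ) *
      (Real.exp (-x) ^ (1 - α) * (α + (1 - α - γ) * Real.exp (-x))))

lemma tailAG_hasDerivAt (α γ : ℝ) (hα1 : α < 1) (hγα : γ < α)
    {t : ℝ} (ht : 0 < t) :
    HasDerivAt (fun s => -(tailAG α γ s)) (lamAG α γ t) t := by
  have := auxDeriv α γ hα1 hγα
    (α * Real.Gamma (1 - γ / α) / (Real.Gamma (1 - α) * Real.Gamma (1 - γ))) t ht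
  unfold tailAG lamAG
  exact this

lemma lamAG_nonneg (α γ : ℝ) (hα0 : 0 < α) (hα1 : α < 1) (hγ0 : 0 < γ) (hγα : γ < α)
    {t : ℝ} (ht : 0 < t) : 0 ≤ lamAG α γ t := by
  have hγ1 : γ < 1 := hγα.trans hα1
  have hu0 : 0 < Real.exp (-t) := Real.exp_pos _
  have hu1 : Real.exp (-t) < 1 := by rw [Real.exp_lt_one_iff]; linarith
  have hb0 : 0 < 1 - Real.exp (-t) := by linarith
  have hC : 0 < α * Real.Gamma (1 - γ / α) / (Real.Gamma (1 - α) * Real.Gamma (1 - γ)) := by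
    apply div_pos (mul_pos hα0 (Real.Gamma_pos_of_pos ?_))
      (mul_pos (Real.Gamma_pos_of_pos (by linarith)) (Real.Gamma_pos_of_pos (by linarith)))
    have : γ / α < 1 := (div_lt_one hα0).2 hγα
    linarith
  unfold lamAG
  apply mul_nonneg (mul_nonneg (mul_nonneg hC.le (Real.rpow_nonneg hb0.le _))
    (Real.rpow_nonneg hu0.le _))
  set u := Real.exp (-t)
  have hk1 : (α - γ) / (1 - γ) ≤ 1 := by
    rw [div_le_one (by linarith)]; linarith
  have hk0 : 0 ≤ (α - γ) / (1 - γ) := by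
    apply div_nonneg <;> linarith
  set k := (α - γ) / (1 - γ)
  have hs0 : 0 ≤ 2 * u * (1 - u) + k * (1 - u) ^ 2 := by positivity
  have hs1 : 2 * u * (1 - u) + k * (1 - u) ^ 2 ≤ 1 := by
    nlinarith [mul_nonneg (sub_nonneg.2 hk1) (sq_nonneg (1 - u)), sq_nonneg u]
  set s := 2 * u * (1 - u) + k * (1 - u) ^ 2
  nlinarith [mul_nonneg (sub_nonneg.2 hs1) hγ0.le,
    mul_nonneg hs0 (by linarith : (0:ℝ) ≤ 1 - α)]

lemma tailAG_tendsto_atTop (α γ : ℝ) (hα1 : α < 1) :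
    Filter.Tendsto (fun x => -(tailAG α γ x)) Filter.atTop (nhds 0) := by
  have hexp : Filter.Tendsto (fun x : ℝ => Real.exp (-x)) Filter.atTop (nhds 0) :=
    Real.tendsto_exp_neg_atTop_nhds_zero
  have hbase : Filter.Tendsto (fun x : ℝ => 1 - Real.exp (-x)) Filter.atTop (nhds 1) := by
    simpa using Filter.Tendsto.sub (tendsto_const_nhds (x := (1:ℝ))) hexp
  have hA : Filter.Tendsto (fun x : ℝ => (1 - Real.exp (-x)) ^ (-γ)) Filter.atTop
      (nhds 1) := by
    have := (Real.continuousAt_rpow_const 1 (-γ) (Or.inl one_ne_zero)).tendsto.comp hbase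
    simpa [Real.one_rpow, Function.comp_def] using this
  have hB : Filter.Tendsto (fun x : ℝ => Real.exp (-x) ^ (1 - α)) Filter.atTop
      (nhds 0) := by
    have := (Real.continuousAt_rpow_const 0 (1 - α) (Or.inr (by linarith))).tendsto.comp hexp
    simpa [Real.zero_rpow (by linarith : (1:ℝ) - α ≠ 0), Function.comp_def] using this
  have hP : Filter.Tendsto (fun x : ℝ => α + (1 - α - γ) * Real.exp (-x)) Filter.atTop
      (nhds (α + (1 - α - γ) * 0)) :=
    tendsto_const_nhds.add (hexp.const_mul _)
  have := ((hA.mul (hB.mul hP)).const_mul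
    ((α * Real.Gamma (1 - γ / α) / (Real.Gamma (1 - α) * Real.Gamma (1 - γ))) / (1 - γ))).neg
  simpa [tailAG] using this

lemma integral_lamAG (α γ : ℝ) (hα0 : 0 < α) (hα1 : α < 1) (hγ0 : 0 < γ) (hγα : γ < α)
    {x : ℝ} (hx : 0 < x) : ∫ t in Set.Ioi x, lamAG α γ t = tailAG α γ x := by
  have := integral_Ioi_of_hasDerivAt_of_nonneg' (a := x)
    (g := fun s => -(tailAG α γ s)) (g' := lamAG α γ)
    (fun t ht => tailAG_hasDerivAt α γ hα1 hγα (lt_of_lt_of_le hx ht))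
    (fun t ht => lamAG_nonneg α γ hα0 hα1 hγ0 hγα (hx.trans ht))
    (tailAG_tendsto_atTop α γ hα1)
  simpa using this

/-- `lim_{x→0+} x^γ·∫_x^∞ λ_{α,γ}(t)dt = αΓ(1−γ/α)/(Γ(1−α)Γ(1−γ))`: the tail of the
tagged-particle Lévy measure is regularly varying at `0` with index `−γ`. -/
theorem stmt18 (α γ : ℝ) (hα : α ∈ Set.Ioo (0 : ℝ) 1) (hγ : γ ∈ Set.Ioo (0 : ℝ) α) :
    Filter.Tendsto (fun x : ℝ => x ^ γ * ∫ t in Set.Ioi x, lamAG α γ t)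
      (nhdsWithin 0 (Set.Ioi 0))
      (nhds (α * Real.Gamma (1 - γ / α) / (Real.Gamma (1 - α) * Real.Gamma (1 - γ)))) := by
  obtain ⟨hα0, hα1⟩ := hα
  obtain ⟨hγ0, hγα⟩ := hγ
  have hγ1 : γ < 1 := hγα.trans hα1
  have h1γ : (1:ℝ) - γ ≠ 0 := by intro h; nlinarith
  -- limit of `(1 - e^{-x})/x` at `0+` is 1
  have hslope : Filter.Tendsto (fun x : ℝ => (1 - Real.exp (-x)) / x)
      (nhdsWithin 0 (Set.Ioi 0)) (nhds 1) := by
    have hd0 : HasDerivAt (fun x : ℝ => 1 - Real.exp (-x)) 1 0 := by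
      have hu : HasDerivAt (fun s : ℝ => Real.exp (-s)) (-1 : ℝ) 0 := by
        simpa [Function.comp_def] using (Real.hasDerivAt_exp (-0)).comp 0 (hasDerivAt_neg 0)
      simpa [Pi.sub_def] using (hasDerivAt_const 0 (1:ℝ)).sub hu
    rw [hasDerivAt_iff_tendsto_slope] at hd0
    have h := hd0.mono_left
      (nhdsWithin_mono 0 (fun y hy => by simpa using ne_of_gt hy))
    refine h.congr (fun y => ?_)
    simp [slope_def_field]
  have h1 : Filter.Tendsto (fun x : ℝ => x ^ γ * (1 - Real.exp (-x)) ^ (-γ))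
      (nhdsWithin 0 (Set.Ioi 0)) (nhds 1) := by
    have hcomp := (Real.continuousAt_rpow_const 1 (-γ) (Or.inl one_ne_zero)).tendsto.comp hslope
    have heq : (fun x : ℝ => ((1 - Real.exp (-x)) / x) ^ (-γ))
        =ᶠ[nhdsWithin 0 (Set.Ioi 0)] (fun x => x ^ γ * (1 - Real.exp (-x)) ^ (-γ)) := by
      filter_upwards [self_mem_nhdsWithin] with y hy
      have hy0 : (0:ℝ) < y := hy
      have hb0 : 0 < 1 - Real.exp (-y) := by
        have : Real.exp (-y) < 1 := by rw [Real.exp_lt_one_iff]; linarith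
        linarith
      rw [Real.div_rpow hb0.le hy0.le, Real.rpow_neg hy0.le, div_eq_mul_inv, inv_inv, mul_comm]
    have := hcomp.congr' heq
    simpa [Real.one_rpow] using this
  have h2 : Filter.Tendsto (fun x : ℝ => Real.exp (-x) ^ (1 - α))
      (nhdsWithin 0 (Set.Ioi 0)) (nhds 1) := by
    have hinner : ContinuousAt (fun x : ℝ => Real.exp (-x)) 0 :=
      (Real.continuous_exp.comp continuous_neg).continuousAt
    have hc : ContinuousAt (fun x : ℝ => Real.exp (-x) ^ (1 - α)) 0 :=
      ContinuousAt.rpow_const hinner (Or.inl (Real.exp_ne_zero _))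
    have := hc.tendsto.mono_left (nhdsWithin_le_nhds (s := Set.Ioi (0:ℝ)))
    simpa using this
  have h3 : Filter.Tendsto (fun x : ℝ => α + (1 - α - γ) * Real.exp (-x))
      (nhdsWithin 0 (Set.Ioi 0)) (nhds (α + (1 - α - γ) * 1)) := by
    have hc : ContinuousAt (fun x : ℝ => α + (1 - α - γ) * Real.exp (-x)) 0 :=
      continuousAt_const.add (continuousAt_const.mul
        ((Real.continuous_exp.comp continuous_neg).continuousAt))
    have := hc.tendsto.mono_left (nhdsWithin_le_nhds (s := Set.Ioi (0:ℝ)))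
    simpa using this
  set C := α * Real.Gamma (1 - γ / α) / (Real.Gamma (1 - α) * Real.Gamma (1 - γ)) with hC
  have hfin := (h1.mul (h2.mul h3)).const_mul (C / (1 - γ))
  have hval : C / (1 - γ) * (1 * (1 * (α + (1 - α - γ) * 1))) = C := by
    rw [show α + (1 - α - γ) * 1 = 1 - γ by ring, one_mul, one_mul,
      div_mul_cancel₀ _ h1γ]
  rw [hval] at hfin
  refine hfin.congr' ?_
  filter_upwards [self_mem_nhdsWithin] with y hy
  have hy0 : (0:ℝ) < y := hy
  rw [integral_lamAG α γ hα0 hα1 hγ0 hγα hy0]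
  unfold tailAG
  rw [← hC]
  ring
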